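/- (FIKI/FKIK/FKIF Lemma) Let (X, τ₁, …, τₙ) be a saturated n-topological space and let 1 ≤ y ≤ x ≤ n. Then for all 1 ≤ z, w ≤ n and every subset A ⊆ X: f_x(i_y(k_z(i_w A))) = f_x(k_x(i_x A)); f_x(k_y(i_z(k_w A))) = f_x(i_x(k_x A)); and f_x(k_y(i_z(f_w A))) = f_x(i_x(f_x A)). -/

import Mathlib

open Set

noncomputable section

/-- The closure operator of the topology `t`, as an element of the monoid
`Function.End (Set X)` of self-maps of the power set of `X` under composition. -/
def clOp {X : Type*} (t : TopologicalSpace X) : Function.End (Set X) := fun A => @closure X t A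

/-- The interior operator of the topology `t`. -/
def intOp {X : Type*} (t : TopologicalSpace X) : Function.End (Set X) := fun A => @interior X t A

/-- The frontier (topological boundary) operator of the topology `t`. -/
def frOp {X : Type*} (t : TopologicalSpace X) : Function.End (Set X) := fun A => @frontier X t A

/-- The set-complement operator. -/
def complOp {X : Type*} : Function.End (Set X) := fun A => Aᶜ

/-- An `n`-topological space: the topologies `τ 0 ⊇ τ 1 ⊇ ⋯ ⊇ τ (n-1)` are linearly
ordered by inclusion, with `τ 0` the finest: every `τ j`-open set is `τ i`-open
whenever `i ≤ j`. -/
def OrderedTop {X : Type*} {n : ℕ} (τ : Fin n → TopologicalSpace X) : Prop :=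
  ∀ i j : Fin n, i ≤ j → ∀ U : Set X, (τ j).IsOpen U → (τ i).IsOpen U

/-- Saturation: every nonempty `τ x`-open set has nonempty `τ y`-interior. -/
def SaturatedTop {X : Type*} {n : ℕ} (τ : Fin n → TopologicalSpace X) : Prop :=
  ∀ x y : Fin n, ∀ U : Set X, (τ x).IsOpen U → U.Nonempty → (@interior X (τ y) U).Nonempty

/-- `KFₙ⁰`: the submonoid of `Function.End (Set X)` generated by the closure,
interior and frontier operators of the topologies `τ j`. -/
def KF0 {X : Type*} {n : ℕ} (τ : Fin n → TopologicalSpace X) : Submonoid (Function.End (Set X)) :=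
  Submonoid.closure (⋃ j : Fin n, {clOp (τ j), intOp (τ j), frOp (τ j)})

/-- `KFₙ`: the submonoid of `Function.End (Set X)` generated by the closure and
frontier operators of the topologies `τ j` together with the complement operator. -/
def KF {X : Type*} {n : ℕ} (τ : Fin n → TopologicalSpace X) : Submonoid (Function.End (Set X)) :=
  Submonoid.closure ((⋃ j : Fin n, {clOp (τ j), frOp (τ j)}) ∪ {complOp})

/-- `p(n) = (5/24)n⁴ + (37/12)n³ + (79/24)n² + (101/12)n + 2`. -/
def pQ (n : ℕ) : ℚ :=
  5/24*(n:ℚ)^4 + 37/12*(n:ℚ)^3 + 79/24*(n:ℚ)^2 + 101/12*(n:ℚ) + 2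

/-- A saturated pair of topologies: every nonempty set open in either topology has
nonempty interior with respect to both. -/
def Saturated2 {X : Type*} (t1 t2 : TopologicalSpace X) : Prop :=
  ∀ U : Set X, (t1.IsOpen U ∨ t2.IsOpen U) → U.Nonempty →
    (@interior X t1 U).Nonempty ∧ (@interior X t2 U).Nonempty

/-- `KF₂⁰`: the submonoid generated by `{k₁, i₁, f₁, k₂, i₂, f₂}`. -/
def KF20 {X : Type*} (t1 t2 : TopologicalSpace X) : Submonoid (Function.End (Set X)) :=
  Submonoid.closure {clOp t1, intOp t1, frOp t1, clOp t2, intOp t2, frOp t2}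

/-- `KF₂`: the submonoid generated by `{k₁, f₁, k₂, f₂, c}`. -/
def KF2 {X : Type*} (t1 t2 : TopologicalSpace X) : Submonoid (Function.End (Set X)) :=
  Submonoid.closure {clOp t1, frOp t1, clOp t2, frOp t2, complOp}

/-! Saturation makes `kₐ i_b = kₐ i_c` for all indices `a, b, c`: every `τ_a`-neighbourhood `V`
of a point of `i_b B` meets `i_c B`, because `V ∩ i_b B` is open in the finer of `τ_a, τ_b` and
so has nonempty `τ_c`-interior. Dually `iₐ k_b = iₐ k_c` and `iₐ f_b = iₐ f_c`. Since `fₓ S`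
depends only on `kₓ S` and `iₓ S`, each identity then reduces to computing these two sets, using
that `τ_y` is finer than `τ_x` and that `iₓ fₓ A` is regular open; FKIK is FIKI for `Aᶜ`. -/

open Topology

local notation "interior[" t "]" => @interior _ t

local notation "frontier[" t "]" => @frontier _ t

section OneTopology

variable {X : Type*} [t : TopologicalSpace X] {s u : Set X}

theorem frontier_congr (hk : closure s = closure u) (hi : interior s = interior u) :
    frontier s = frontier u := by
  rw [frontier, frontier, hk, hi]

theorem interior_closure_interior_frontier (s : Set X) :
    interior (closure (interior (frontier s))) = interior (frontier s) := by
  refine subset_antisymm ?_ isOpen_interior.subset_interior_closure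
  -- `interior (frontier s)` is the intersection of the regular open sets
  -- `interior (closure s)` and `interior (closure sᶜ)`.
  rw [frontier_eq_closure_inter_closure, interior_inter]
  calc interior (closure (interior (closure s) ∩ interior (closure sᶜ)))
      ⊆ interior (closure (interior (closure s))) ∩ interior (closure (interior (closure sᶜ))) :=
        (interior_mono (closure_inter_subset_inter_closure _ _)).trans_eq interior_inter
    _ = interior (closure s) ∩ interior (closure sᶜ) := by
        rw [interior_closure_idem, interior_closure_idem]

end OneTopology

section TwoTopologies

variable {X : Type*} {t₁ t₂ : TopologicalSpace X}

theorem interior.mono (h : t₁ ≤ t₂) (s : Set X) : interior[t₂] s ⊆ interior[t₁] s :=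
  @interior_maximal X t₁ _ _ (@interior_subset X t₂ s) ((@isOpen_interior X t₂ s).mono h)

theorem interior_interior_of_le (h : t₁ ≤ t₂) (s : Set X) :
    interior[t₂] (interior[t₁] s) = interior[t₂] s :=
  (@interior_mono X t₂ _ _ (@interior_subset X t₁ s)).antisymm
    (@interior_maximal X t₂ _ _ (interior.mono h s) (@isOpen_interior X t₂ s))

theorem closure_closure_of_le (h : t₁ ≤ t₂) (s : Set X) :
    closure[t₂] (closure[t₁] s) = closure[t₂] s :=
  (@closure_minimal X t₂ _ _ (closure.mono h) (@isClosed_closure X t₂ s)).antisymm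
    (@closure_mono X t₂ _ _ (@subset_closure X t₁ s))

end TwoTopologies

theorem interior_subset_closure_interior_of_saturated {X : Type*}
    {t s u v : TopologicalSpace X} (hs : t ≤ s) (hu : t ≤ u)
    (hsat : ∀ U : Set X, IsOpen[t] U → U.Nonempty → (interior[v] U).Nonempty) (B : Set X) :
    interior[u] B ⊆ closure[s] (interior[v] B) := by
  intro p hp
  refine (@mem_closure_iff X s _ _).2 fun V hV hpV => ?_
  have hW : IsOpen[t] (V ∩ interior[u] B) :=
    @IsOpen.inter X t _ _ (hV.mono hs) ((@isOpen_interior X u B).mono hu)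
  obtain ⟨q, hq⟩ := hsat _ hW ⟨p, hpV, hp⟩
  have hqW : q ∈ V ∩ interior[u] B := @interior_subset X v _ _ hq
  exact ⟨q, hqW.1, (@interior_mono X v _ _ (inter_subset_right.trans (@interior_subset X u B))) hq⟩

namespace SaturatedTop

variable {X : Type*} {n : ℕ} {τ : Fin n → TopologicalSpace X}

theorem closure_interior_eq (hsat : SaturatedTop τ) (hord : OrderedTop τ) (a b c : Fin n)
    (B : Set X) : closure[τ a] (interior[τ b] B) = closure[τ a] (interior[τ c] B) := by
  have key : ∀ b c, interior[τ b] B ⊆ closure[τ a] (interior[τ c] B) := fun b c =>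
    interior_subset_closure_interior_of_saturated (hord _ _ (min_le_left a b))
      (hord _ _ (min_le_right a b)) (hsat (min a b) c) B
  exact (@closure_minimal X (τ a) _ _ (key b c) (@isClosed_closure X (τ a) _)).antisymm
    (@closure_minimal X (τ a) _ _ (key c b) (@isClosed_closure X (τ a) _))

theorem interior_closure_eq (hsat : SaturatedTop τ) (hord : OrderedTop τ) (a b c : Fin n)
    (B : Set X) : interior[τ a] (closure[τ b] B) = interior[τ a] (closure[τ c] B) := by
  rw [@closure_eq_compl_interior_compl X (τ b), @closure_eq_compl_interior_compl X (τ c),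
    @interior_compl X (τ a), @interior_compl X (τ a), hsat.closure_interior_eq hord a b c]

theorem interior_frontier_eq (hsat : SaturatedTop τ) (hord : OrderedTop τ) (a b c : Fin n)
    (B : Set X) : interior[τ a] (frontier[τ b] B) = interior[τ a] (frontier[τ c] B) := by
  rw [@frontier_eq_closure_inter_closure X (τ b), @frontier_eq_closure_inter_closure X (τ c),
    @interior_inter X (τ a), @interior_inter X (τ a), hsat.interior_closure_eq hord a b c,
    hsat.interior_closure_eq hord a b c]

theorem frontier_interior_closure_interior (hsat : SaturatedTop τ) (hord : OrderedTop τ)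
    {x y : Fin n} (hyx : y ≤ x) (z w : Fin n) (A : Set X) :
    frontier[τ x] (interior[τ y] (closure[τ z] (interior[τ w] A))) =
      frontier[τ x] (closure[τ x] (interior[τ x] A)) := by
  rw [hsat.interior_closure_eq hord y z y, hsat.closure_interior_eq hord y w y]
  have hyx' : τ y ≤ τ x := hord y x hyx
  refine frontier_congr (t := τ x) ?_ ?_
  · -- `interior[τ y] (closure[τ y] (interior[τ y] A))` lies between `interior[τ y] A`
    -- and its `τ y`-closure, so its `τ x`-closure is that of `interior[τ y] A`.
    have hlow : interior[τ y] A ⊆ interior[τ y] (closure[τ y] (interior[τ y] A)) :=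
      @IsOpen.subset_interior_closure X (τ y) _ (@isOpen_interior X (τ y) A)
    have hup : closure[τ x] (interior[τ y] (closure[τ y] (interior[τ y] A))) ⊆
        closure[τ x] (interior[τ y] A) := by
      rw [← closure_closure_of_le hyx' (interior[τ y] A)]
      exact @closure_mono X (τ x) _ _ (@interior_subset X (τ y) _)
    rw [(hup.antisymm (@closure_mono X (τ x) _ _ hlow)), @closure_closure X (τ x),
      hsat.closure_interior_eq hord x y x]
  · rw [interior_interior_of_le hyx', hsat.interior_closure_eq hord x y x,
      hsat.closure_interior_eq hord x y x]

theorem frontier_closure_interior_closure (hsat : SaturatedTop τ) (hord : OrderedTop τ)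
    {x y : Fin n} (hyx : y ≤ x) (z w : Fin n) (A : Set X) :
    frontier[τ x] (closure[τ y] (interior[τ z] (closure[τ w] A))) =
      frontier[τ x] (interior[τ x] (closure[τ x] A)) := by
  have hcompl : closure[τ y] (interior[τ z] (closure[τ w] A)) =
      (interior[τ y] (closure[τ z] (interior[τ w] Aᶜ)))ᶜ := by
    rw [@closure_eq_compl_interior_compl X (τ w) A, @interior_compl X (τ z),
      @closure_compl X (τ y)]
  rw [hcompl, @frontier_compl X (τ x), hsat.frontier_interior_closure_interior hord hyx z w Aᶜ,
    @interior_compl X (τ x), @closure_compl X (τ x), @frontier_compl X (τ x)]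

theorem frontier_closure_interior_frontier (hsat : SaturatedTop τ) (hord : OrderedTop τ)
    {x y : Fin n} (hyx : y ≤ x) (z w : Fin n) (A : Set X) :
    frontier[τ x] (closure[τ y] (interior[τ z] (frontier[τ w] A))) =
      frontier[τ x] (interior[τ x] (frontier[τ x] A)) := by
  rw [hsat.interior_frontier_eq hord z w x]
  refine frontier_congr (t := τ x) ?_ ?_
  · rw [closure_closure_of_le (hord y x hyx), hsat.closure_interior_eq hord x z x]
  · rw [hsat.interior_closure_eq hord x y x, hsat.closure_interior_eq hord x z x,
      interior_closure_interior_frontier (t := τ x), @interior_interior X (τ x)]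

end SaturatedTop

/-- FIKI/FKIK/FKIF Lemma: in a saturated `n`-topological space,
for `y ≤ x` and all indices `z, w` and all `A ⊆ X`:
`fₓ(i_y(k_z(i_w A))) = fₓ(kₓ(iₓ A))`, `fₓ(k_y(i_z(k_w A))) = fₓ(iₓ(kₓ A))`, and
`fₓ(k_y(i_z(f_w A))) = fₓ(iₓ(fₓ A))`. -/
theorem stmt_10 {X : Type*} {n : ℕ} (τ : Fin n → TopologicalSpace X)
    (hord : OrderedTop τ) (hsat : SaturatedTop τ) (x y : Fin n) (hyx : y ≤ x)
    (z w : Fin n) (A : Set X) :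
    (@frontier X (τ x) (@interior X (τ y) (@closure X (τ z) (@interior X (τ w) A))) =
        @frontier X (τ x) (@closure X (τ x) (@interior X (τ x) A))) ∧
      (@frontier X (τ x) (@closure X (τ y) (@interior X (τ z) (@closure X (τ w) A))) =
        @frontier X (τ x) (@interior X (τ x) (@closure X (τ x) A))) ∧
      (@frontier X (τ x) (@closure X (τ y) (@interior X (τ z) (@frontier X (τ w) A))) =
        @frontier X (τ x) (@interior X (τ x) (@frontier X (τ x) A))) :=
  ⟨hsat.frontier_interior_closure_interior hord hyx z w A,
    hsat.frontier_closure_interior_closure hord hyx z w A,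
    hsat.frontier_closure_interior_frontier hord hyx z w A⟩
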